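/- Let u be the map with u(e_i) = 0 for i ≤ r and u(e_{r+p}) = e_p on an (r+s)-dimensional space (r ≥ s). Let T* be a row-standard two-column tableau with first-column entries a*_1, …, a*_r and second-column entries b_1 < … < b_s satisfying a*_p < b_p. Then the dimension of the space of endomorphisms of V commuting with u and stabilizing every subspace of the flag F_{T*} equals #{(p,q) : 1 ≤ p,q ≤ r, s < q, a*_p ≤ a*_q} + #{(p,q) : 1 ≤ p ≤ r, 1 ≤ q ≤ s, a*_p < b_q} + #{(p,q) : 1 ≤ p ≤ q ≤ s, a*_p ≤ a*_q}. -/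

import Mathlib

open Module

/-- Entry map of a two-column tableau with first-column entries `a` and second-column
entries `b` (all 0-indexed). -/
def entryOf (r s : ℕ) (a : Fin r → Fin (r + s)) (b : Fin s → Fin (r + s)) :
    Fin (r + s) → Fin (r + s) := fun x =>
  if h : x.val < r then a ⟨x.val, h⟩ else b ⟨x.val - r, by have := x.isLt; omega⟩

/-- The flag associated to a tableau with entry map `entry`: its `k`-th subspace is
spanned by the standard basis vectors whose (0-indexed) entry is `< k`. -/
noncomputable def flagOf (K : Type*) [Field K] (n : ℕ) (entry : Fin n → Fin n) (k : ℕ) :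
    Submodule K (Fin n → K) :=
  Submodule.span K ((fun x => Pi.single x (1 : K)) '' {x | (entry x).val < k})

/-- The space of endomorphisms commuting with `u` and stabilizing each subspace `Vk k`. -/
def stabSp (K : Type*) [Field K] (n : ℕ) (u : Module.End K (Fin n → K))
    (Vk : ℕ → Submodule K (Fin n → K)) : Submodule K (Module.End K (Fin n → K)) where
  carrier := {g | u ∘ₗ g = g ∘ₗ u ∧ ∀ k, ∀ x ∈ Vk k, g x ∈ Vk k}
  add_mem' := by
    rintro a b ⟨ha1, ha2⟩ ⟨hb1, hb2⟩
    refine ⟨?_, fun k x hx => (Vk k).add_mem (ha2 k x hx) (hb2 k x hx)⟩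
    rw [LinearMap.comp_add, LinearMap.add_comp, ha1, hb1]
  zero_mem' := by
    refine ⟨?_, fun k x hx => by simpa using (Vk k).zero_mem⟩
    ext v; simp
  smul_mem' := by
    rintro c a ⟨ha1, ha2⟩
    refine ⟨?_, fun k x hx => by simpa using (Vk k).smul_mem c (ha2 k x hx)⟩
    rw [LinearMap.comp_smul, LinearMap.smul_comp, ha1]

/-!
Split the basis into `A = (e_p)_{p<r}` and `B = (e_{r+q})_{q<s}`. An endomorphism `g` commuting
with `u` has arbitrary columns at `B`, columns in `ker u = span A` at `e_p` for `s ≤ p < r`, and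
its column at `e_q` (`q < s`) is `u` applied to its column at `e_{r+q}`; in particular
`g_{q'q} = g_{r+q',r+q}` for `q, q' < s`. Stabilizing `F_{T*}` means `g_{yx} = 0` whenever the
entry of `x` in `T*` is smaller than that of `y`. The free coordinates surviving these vanishing
conditions, the pivots, are exactly the three sets of the formula (a `B × B` pivot needs
`b_p ≤ b_q` and, through its copy in the `A × A` block, `a*_p ≤ a*_q`). Evaluation at the pivots
is thus injective on the stabilizer, and it is onto since each pivot carries a matrix unit of the
stabilizer, together with its copy for a `B × B` pivot.
-/

@[simp]
theorem Fin.castAdd_ne_natAdd {m n : ℕ} (i : Fin m) (j : Fin n) :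
    Fin.castAdd n i ≠ Fin.natAdd m j := by
  rw [ne_eq, Fin.ext_iff, Fin.val_castAdd, Fin.val_natAdd]
  omega

@[simp]
theorem Fin.natAdd_ne_castAdd {m n : ℕ} (i : Fin m) (j : Fin n) :
    Fin.natAdd m j ≠ Fin.castAdd n i := (Fin.castAdd_ne_natAdd i j).symm

section Tableau

variable {r s : ℕ} (astar : Fin r → Fin (r + s)) (b : Fin s → Fin (r + s))

@[simp]
theorem entryOf_castAdd (p : Fin r) : entryOf r s astar b (Fin.castAdd s p) = astar p := by
  simp [entryOf]

@[simp]
theorem entryOf_natAdd (q : Fin s) : entryOf r s astar b (Fin.natAdd r q) = b q := by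
  simp [entryOf]

end Tableau

section Flag

variable {K : Type*} [Field K] {n : ℕ}

theorem mem_flagOf_iff (entry : Fin n → Fin n) (k : ℕ) (v : Fin n → K) :
    v ∈ flagOf K n entry k ↔ ∀ y, k ≤ (entry y).val → v y = 0 := by
  have hbasis : (fun x => Pi.single x (1 : K)) = ⇑(Pi.basisFun K (Fin n)) := by
    ext x; simp
  rw [flagOf, hbasis, Basis.mem_span_image]
  simp only [Pi.basisFun_repr, Set.subset_def, Finset.mem_coe, Finsupp.mem_support_iff,
    Set.mem_ofPred_eq]
  exact forall_congr' fun y => by rw [ne_eq, not_imp_comm, not_lt]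

theorem forall_mapsTo_flagOf_iff (entry : Fin n → Fin n) (g : Module.End K (Fin n → K)) :
    (∀ k, ∀ v ∈ flagOf K n entry k, g v ∈ flagOf K n entry k) ↔
      ∀ x y, entry x < entry y → g (Pi.single x 1) y = 0 := by
  refine ⟨fun h x y hxy => ?_, fun h k => ?_⟩
  · have hx : Pi.single x (1 : K) ∈ flagOf K n entry ((entry x).val + 1) :=
      Submodule.subset_span ⟨x, Nat.lt_succ_self _, rfl⟩
    exact (mem_flagOf_iff entry _ _).1 (h _ _ hx) y hxy
  · suffices flagOf K n entry k ≤ (flagOf K n entry k).comap g from fun v hv => this hv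
    refine Submodule.span_le.2 ?_
    rintro _ ⟨x, hx, rfl⟩
    exact (mem_flagOf_iff entry k _).2 fun y hy => h x y (Fin.lt_def.2 (lt_of_lt_of_le hx hy))

end Flag

section MatrixUnit

variable {K : Type*} [Field K] {n : ℕ}

def matrixUnit (y x : Fin n) : Module.End K (Fin n → K) :=
  (LinearMap.proj x).smulRight (Pi.single y 1)

theorem matrixUnit_apply (y x : Fin n) (v : Fin n → K) :
    matrixUnit y x v = v x • Pi.single y 1 := rfl

theorem matrixUnit_single_apply (y x x' y' : Fin n) :
    matrixUnit (K := K) y x (Pi.single x' 1) y' = if y' = y ∧ x' = x then 1 else 0 := by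
  by_cases hx : x' = x <;> by_cases hy : y' = y <;> simp [matrixUnit_apply, *]

theorem matrixUnit_single_apply_eq_zero {entry : Fin n → Fin n} {y x : Fin n}
    (hyx : entry y ≤ entry x) {x' y' : Fin n} (h : entry x' < entry y') :
    matrixUnit (K := K) y x (Pi.single x' 1) y' = 0 := by
  rw [matrixUnit_single_apply, if_neg]
  rintro ⟨rfl, rfl⟩
  exact not_le.2 h hyx

end MatrixUnit

def IsTwoColumnNilpotent {K : Type*} [Field K] (r s : ℕ) (u : Module.End K (Fin (r + s) → K)) :
    Prop :=
  ∀ x : Fin (r + s), u (Pi.single x 1) =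
    if r ≤ x.val then Pi.single (⟨x.val - r, (Nat.sub_le _ _).trans_lt x.isLt⟩ : Fin (r + s)) 1
    else 0

namespace IsTwoColumnNilpotent

variable {K : Type*} [Field K] {r s : ℕ} {u g : Module.End K (Fin (r + s) → K)}

theorem apply (hu : IsTwoColumnNilpotent r s u) (w : Fin (r + s) → K) (y : Fin (r + s)) :
    u w y = if h : y.val < s then w ⟨r + y.val, by omega⟩ else 0 := by
  let shift : Module.End K (Fin (r + s) → K) :=
    LinearMap.pi fun y => if h : y.val < s then LinearMap.proj ⟨r + y.val, by omega⟩ else 0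
  suffices u = shift by
    subst this
    by_cases h : y.val < s <;> simp [shift, h]
  refine (Pi.basisFun K _).ext fun x => funext fun y => ?_
  rw [Pi.basisFun_apply, hu x]
  by_cases hy : y.val < s <;> by_cases hx : r ≤ x.val <;> by_cases hxy : x.val = r + y.val <;>
    simp [shift, hx, hy, hxy, Pi.single_apply, Fin.ext_iff] <;> omega

theorem apply_castAdd_castLE (hu : IsTwoColumnNilpotent r s u) (hrs : s ≤ r)
    (w : Fin (r + s) → K) (q : Fin s) :
    u w (Fin.castAdd s (Fin.castLE hrs q)) = w (Fin.natAdd r q) := by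
  simp [hu.apply, Fin.natAdd]

theorem apply_castAdd_of_le (hu : IsTwoColumnNilpotent r s u) (w : Fin (r + s) → K)
    {p : Fin r} (hp : s ≤ p.val) : u w (Fin.castAdd s p) = 0 := by
  simp [hu.apply, hp]

theorem apply_natAdd (hu : IsTwoColumnNilpotent r s u) (hrs : s ≤ r) (w : Fin (r + s) → K)
    (q : Fin s) : u w (Fin.natAdd r q) = 0 := by
  rw [hu.apply, dif_neg (by rw [Fin.val_natAdd]; omega)]

theorem single_castAdd (hu : IsTwoColumnNilpotent r s u) (p : Fin r) :
    u (Pi.single (Fin.castAdd s p) 1) = 0 := by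
  simp [hu (Fin.castAdd s p)]

theorem single_natAdd (hu : IsTwoColumnNilpotent r s u) (hrs : s ≤ r) (q : Fin s) :
    u (Pi.single (Fin.natAdd r q) 1) = Pi.single (Fin.castAdd s (Fin.castLE hrs q)) 1 := by
  rw [hu, if_pos (show r ≤ (Fin.natAdd r q).val from Nat.le_add_right r q)]
  congr 1
  ext
  simp

theorem entry_natAdd_castAdd (hu : IsTwoColumnNilpotent r s u) (hrs : s ≤ r)
    (hcomm : u ∘ₗ g = g ∘ₗ u) (q : Fin s) (p : Fin r) :
    g (Pi.single (Fin.castAdd s p) 1) (Fin.natAdd r q) = 0 := by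
  have := congr_fun (LinearMap.congr_fun hcomm (Pi.single (Fin.castAdd s p) 1))
    (Fin.castAdd s (Fin.castLE hrs q))
  simpa [hu.apply_castAdd_castLE hrs, hu.single_castAdd] using this

theorem entry_castAdd_castLE_of_le (hu : IsTwoColumnNilpotent r s u) (hrs : s ≤ r)
    (hcomm : u ∘ₗ g = g ∘ₗ u) (q : Fin s) {p : Fin r} (hp : s ≤ p.val) :
    g (Pi.single (Fin.castAdd s (Fin.castLE hrs q)) 1) (Fin.castAdd s p) = 0 := by
  have := congr_fun (LinearMap.congr_fun hcomm (Pi.single (Fin.natAdd r q) 1)) (Fin.castAdd s p)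
  simpa [hu.apply_castAdd_of_le _ hp, hu.single_natAdd hrs] using this.symm

theorem entry_castLE_castLE (hu : IsTwoColumnNilpotent r s u) (hrs : s ≤ r)
    (hcomm : u ∘ₗ g = g ∘ₗ u) (q p : Fin s) :
    g (Pi.single (Fin.castAdd s (Fin.castLE hrs q)) 1) (Fin.castAdd s (Fin.castLE hrs p)) =
      g (Pi.single (Fin.natAdd r q) 1) (Fin.natAdd r p) := by
  have := congr_fun (LinearMap.congr_fun hcomm (Pi.single (Fin.natAdd r q) 1))
    (Fin.castAdd s (Fin.castLE hrs p))
  simpa [hu.apply_castAdd_castLE hrs, hu.single_natAdd hrs] using this.symm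

theorem commute_matrixUnit_castAdd_castAdd (hu : IsTwoColumnNilpotent r s u) (p : Fin r)
    {q : Fin r} (hq : s ≤ q.val) :
    u ∘ₗ matrixUnit (Fin.castAdd s p) (Fin.castAdd s q) =
      matrixUnit (Fin.castAdd s p) (Fin.castAdd s q) ∘ₗ u := by
  refine LinearMap.ext fun v => ?_
  simp [matrixUnit_apply, hu.single_castAdd, hu.apply_castAdd_of_le _ hq]

theorem commute_matrixUnit_castAdd_natAdd (hu : IsTwoColumnNilpotent r s u) (hrs : s ≤ r)
    (p : Fin r) (q : Fin s) :
    u ∘ₗ matrixUnit (Fin.castAdd s p) (Fin.natAdd r q) =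
      matrixUnit (Fin.castAdd s p) (Fin.natAdd r q) ∘ₗ u := by
  refine LinearMap.ext fun v => ?_
  simp [matrixUnit_apply, hu.single_castAdd, hu.apply_natAdd hrs]

theorem commute_matrixUnit_natAdd_natAdd (hu : IsTwoColumnNilpotent r s u) (hrs : s ≤ r)
    (p q : Fin s) :
    u ∘ₗ (matrixUnit (Fin.natAdd r p) (Fin.natAdd r q) +
        matrixUnit (Fin.castAdd s (Fin.castLE hrs p)) (Fin.castAdd s (Fin.castLE hrs q))) =
      (matrixUnit (Fin.natAdd r p) (Fin.natAdd r q) +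
        matrixUnit (Fin.castAdd s (Fin.castLE hrs p)) (Fin.castAdd s (Fin.castLE hrs q))) ∘ₗ u := by
  refine LinearMap.ext fun v => ?_
  simp [matrixUnit_apply, hu.single_castAdd, hu.single_natAdd hrs, hu.apply_natAdd hrs,
    hu.apply_castAdd_castLE hrs]

end IsTwoColumnNilpotent

section Pivots

variable {K : Type*} [Field K] {r s : ℕ} (hrs : s ≤ r) (astar : Fin r → Fin (r + s))
  (b : Fin s → Fin (r + s))

-- Positions `(row, column)`; subscript `1` refers to the block `A`, `2` to the block `B`.
def pivots₁₁ : Set (Fin r × Fin r) := {pq | s ≤ pq.2.val ∧ astar pq.1 ≤ astar pq.2}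

def pivots₁₂ : Set (Fin r × Fin s) := {pq | astar pq.1 < b pq.2}

def pivots₂₂ : Set (Fin s × Fin s) :=
  {pq | pq.1 ≤ pq.2 ∧ astar (Fin.castLE hrs pq.1) ≤ astar (Fin.castLE hrs pq.2)}

abbrev Pivots : Type := pivots₁₁ astar ⊕ pivots₁₂ astar b ⊕ pivots₂₂ hrs astar

def pivot : Pivots hrs astar b → Fin (r + s) × Fin (r + s)
  | .inl ⟨(p, q), _⟩ => (Fin.castAdd s p, Fin.castAdd s q)
  | .inr (.inl ⟨(p, q), _⟩) => (Fin.castAdd s p, Fin.natAdd r q)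
  | .inr (.inr ⟨(p, q), _⟩) => (Fin.natAdd r p, Fin.natAdd r q)

variable (K) in
def pivotEntries : Module.End K (Fin (r + s) → K) →ₗ[K] (Pivots hrs astar b → K) where
  toFun g σ := g (Pi.single (pivot hrs astar b σ).2 1) (pivot hrs astar b σ).1
  map_add' _ _ := rfl
  map_smul' _ _ := rfl

def pivotEnd : Pivots hrs astar b → Module.End K (Fin (r + s) → K)
  | .inl ⟨(p, q), _⟩ => matrixUnit (Fin.castAdd s p) (Fin.castAdd s q)
  | .inr (.inl ⟨(p, q), _⟩) => matrixUnit (Fin.castAdd s p) (Fin.natAdd r q)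
  | .inr (.inr ⟨(p, q), _⟩) => matrixUnit (Fin.natAdd r p) (Fin.natAdd r q) +
      matrixUnit (Fin.castAdd s (Fin.castLE hrs p)) (Fin.castAdd s (Fin.castLE hrs q))

theorem pivotEntries_pivotEnd (σ : Pivots hrs astar b) :
    pivotEntries K hrs astar b (pivotEnd hrs astar b σ) = Pi.single σ 1 := by
  funext τ
  rcases σ with ⟨⟨p, q⟩, hq, -⟩ | ⟨⟨p, q⟩, -⟩ | ⟨⟨p, q⟩, -⟩ <;>
  rcases τ with ⟨⟨p', q'⟩, hq', -⟩ | ⟨⟨p', q'⟩, -⟩ | ⟨⟨p', q'⟩, -⟩ <;>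
  simp [pivotEntries, pivot, pivotEnd, matrixUnit_single_apply, Pi.single_apply, Subtype.ext_iff]
  rintro - rfl
  exact absurd hq' (by simp)

variable {u g : Module.End K (Fin (r + s) → K)}

theorem commute_pivotEnd (hu : IsTwoColumnNilpotent r s u) (σ : Pivots hrs astar b) :
    u ∘ₗ pivotEnd hrs astar b σ = pivotEnd hrs astar b σ ∘ₗ u := by
  rcases σ with ⟨⟨p, q⟩, hq, -⟩ | ⟨⟨p, q⟩, -⟩ | ⟨⟨p, q⟩, -⟩
  · exact hu.commute_matrixUnit_castAdd_castAdd p hq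
  · exact hu.commute_matrixUnit_castAdd_natAdd hrs p q
  · exact hu.commute_matrixUnit_natAdd_natAdd hrs p q

theorem pivotEnd_single_apply_eq_zero (hb : Monotone b) (σ : Pivots hrs astar b)
    {x y : Fin (r + s)} (h : entryOf r s astar b x < entryOf r s astar b y) :
    pivotEnd hrs astar b σ (Pi.single x (1 : K)) y = 0 := by
  rcases σ with ⟨⟨p, q⟩, -, hpq⟩ | ⟨⟨p, q⟩, hpq⟩ | ⟨⟨p, q⟩, hpq, hapq⟩
  · exact matrixUnit_single_apply_eq_zero (by simpa using hpq) h
  · exact matrixUnit_single_apply_eq_zero (by simpa using hpq.le) h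
  · simp only [pivotEnd, LinearMap.add_apply, Pi.add_apply]
    rw [matrixUnit_single_apply_eq_zero (by simpa using hb hpq) h,
      matrixUnit_single_apply_eq_zero (by simpa using hapq) h, add_zero]

theorem pivotEnd_mem_stabSp (hu : IsTwoColumnNilpotent r s u) (hb : Monotone b)
    (σ : Pivots hrs astar b) :
    pivotEnd hrs astar b σ ∈ stabSp K (r + s) u (flagOf K (r + s) (entryOf r s astar b)) :=
  ⟨commute_pivotEnd hrs astar b hu σ, (forall_mapsTo_flagOf_iff _ _).2 fun _ _ =>
    pivotEnd_single_apply_eq_zero hrs astar b hb σ⟩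

theorem entry₂₂_eq_zero_of_pivotEntries (hu : IsTwoColumnNilpotent r s u) (hb : StrictMono b)
    (hcomm : u ∘ₗ g = g ∘ₗ u)
    (hflag : ∀ x y, entryOf r s astar b x < entryOf r s astar b y → g (Pi.single x 1) y = 0)
    (h0 : pivotEntries K hrs astar b g = 0) (p q : Fin s) :
    g (Pi.single (Fin.natAdd r q) 1) (Fin.natAdd r p) = 0 := by
  rcases lt_or_ge q p with hqp | hpq
  · exact hflag _ _ (by simpa using hb hqp)
  rcases lt_or_ge (astar (Fin.castLE hrs q)) (astar (Fin.castLE hrs p)) with ha | ha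
  · rw [← hu.entry_castLE_castLE hrs hcomm]
    exact hflag _ _ (by simpa using ha)
  · exact congr_fun h0 (.inr (.inr ⟨(p, q), hpq, ha⟩))

theorem entry₁₁_eq_zero_of_pivotEntries (hu : IsTwoColumnNilpotent r s u) (hb : StrictMono b)
    (hcomm : u ∘ₗ g = g ∘ₗ u)
    (hflag : ∀ x y, entryOf r s astar b x < entryOf r s astar b y → g (Pi.single x 1) y = 0)
    (h0 : pivotEntries K hrs astar b g = 0) (p q : Fin r) :
    g (Pi.single (Fin.castAdd s q) 1) (Fin.castAdd s p) = 0 := by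
  by_cases hq : s ≤ q.val
  · rcases lt_or_ge (astar q) (astar p) with ha | ha
    · exact hflag _ _ (by simpa using ha)
    · exact congr_fun h0 (.inl ⟨(p, q), hq, ha⟩)
  obtain ⟨q, rfl⟩ : ∃ q' : Fin s, Fin.castLE hrs q' = q := ⟨⟨q, by omega⟩, rfl⟩
  by_cases hp : s ≤ p.val
  · exact hu.entry_castAdd_castLE_of_le hrs hcomm q hp
  obtain ⟨p, rfl⟩ : ∃ p' : Fin s, Fin.castLE hrs p' = p := ⟨⟨p, by omega⟩, rfl⟩
  rw [hu.entry_castLE_castLE hrs hcomm]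
  exact entry₂₂_eq_zero_of_pivotEntries hrs astar b hu hb hcomm hflag h0 p q

theorem entry₁₂_eq_zero_of_pivotEntries (hinj : Function.Injective (entryOf r s astar b))
    (hflag : ∀ x y, entryOf r s astar b x < entryOf r s astar b y → g (Pi.single x 1) y = 0)
    (h0 : pivotEntries K hrs astar b g = 0) (p : Fin r) (q : Fin s) :
    g (Pi.single (Fin.natAdd r q) 1) (Fin.castAdd s p) = 0 := by
  rcases lt_or_ge (b q) (astar p) with ha | ha
  · exact hflag _ _ (by simpa using ha)
  · have hne : astar p ≠ b q := by
      simpa using hinj.ne (Fin.castAdd_ne_natAdd p q)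
    exact congr_fun h0 (.inr (.inl ⟨(p, q), lt_of_le_of_ne ha hne⟩))

theorem eq_zero_of_pivotEntries_eq_zero (hu : IsTwoColumnNilpotent r s u) (hb : StrictMono b)
    (hinj : Function.Injective (entryOf r s astar b))
    (hg : g ∈ stabSp K (r + s) u (flagOf K (r + s) (entryOf r s astar b)))
    (h0 : pivotEntries K hrs astar b g = 0) : g = 0 := by
  obtain ⟨hcomm, hflag⟩ := hg
  rw [forall_mapsTo_flagOf_iff] at hflag
  refine (Pi.basisFun K _).ext fun x => funext fun y => ?_
  rw [Pi.basisFun_apply, LinearMap.zero_apply, Pi.zero_apply]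
  induction x using Fin.addCases with
  | left q => induction y using Fin.addCases with
    | left p => exact entry₁₁_eq_zero_of_pivotEntries hrs astar b hu hb hcomm hflag h0 p q
    | right p => exact hu.entry_natAdd_castAdd hrs hcomm p q
  | right q => induction y using Fin.addCases with
    | left p => exact entry₁₂_eq_zero_of_pivotEntries hrs astar b hinj hflag h0 p q
    | right p => exact entry₂₂_eq_zero_of_pivotEntries hrs astar b hu hb hcomm hflag h0 p q

theorem finrank_stabSp_flagOf (hu : IsTwoColumnNilpotent r s u) (hb : StrictMono b)
    (hinj : Function.Injective (entryOf r s astar b)) :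
    finrank K (stabSp K (r + s) u (flagOf K (r + s) (entryOf r s astar b))) =
      (pivots₁₁ astar).ncard + (pivots₁₂ astar b).ncard + (pivots₂₂ hrs astar).ncard := by
  classical
  let Φ := (pivotEntries K hrs astar b).domRestrict
    (stabSp K (r + s) u (flagOf K (r + s) (entryOf r s astar b)))
  have hΦinj : Function.Injective Φ := LinearMap.ker_eq_bot.1 <| LinearMap.ker_eq_bot'.2
    fun g hg => Subtype.ext (eq_zero_of_pivotEntries_eq_zero hrs astar b hu hb hinj g.2 hg)
  have hΦsurj : Function.Surjective Φ := by
    rw [← LinearMap.range_eq_top, eq_top_iff, ← (Pi.basisFun K _).span_eq, Submodule.span_le]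
    rintro _ ⟨σ, rfl⟩
    exact ⟨⟨_, pivotEnd_mem_stabSp hrs astar b hu hb.monotone σ⟩,
      by simp [Φ, pivotEntries_pivotEnd]⟩
  rw [(LinearEquiv.ofBijective Φ ⟨hΦinj, hΦsurj⟩).finrank_eq, Module.finrank_fintype_fun_eq_card,
    Fintype.card_sum, Fintype.card_sum, add_assoc]
  simp only [← Nat.card_eq_fintype_card, Nat.card_coe_set_eq]

end Pivots

/-- for the two-column nilpotent `u` and a row-standard tableau `T*`
(first-column entries `astar`, second-column entries `b`, 0-indexed) with associated flag
`F_{T*}`, the dimension of the space of endomorphisms commuting with `u` and stabilizing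
the flag equals
`#{(p,q) : 1 ≤ p,q ≤ r, s < q, a*_p ≤ a*_q} + #{(p,q) : p ≤ r, q ≤ s, a*_p < b_q}
  + #{(p,q) : 1 ≤ p ≤ q ≤ s, a*_p ≤ a*_q}`. -/
theorem stmt14 (K : Type*) [Field K] (r s : ℕ) (hrs : s ≤ r)
    (u : Module.End K (Fin (r + s) → K))
    (hu : ∀ x : Fin (r + s), u (Pi.single x 1) =
      if h : r ≤ x.val then Pi.single (⟨x.val - r, by have := x.isLt; omega⟩ : Fin (r + s)) 1
      else 0)
    (astar : Fin r → Fin (r + s)) (b : Fin s → Fin (r + s))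
    (hb : StrictMono b)
    (hbij : Function.Bijective (entryOf r s astar b)) :
    finrank K ↥(stabSp K (r + s) u (flagOf K (r + s) (entryOf r s astar b)))
      = Set.ncard {pq : Fin r × Fin r | s ≤ pq.2.val ∧ astar pq.1 ≤ astar pq.2}
        + Set.ncard {pq : Fin r × Fin s | astar pq.1 < b pq.2}
        + Set.ncard {pq : Fin s × Fin s | pq.1 ≤ pq.2 ∧
            astar (Fin.castLE hrs pq.1) ≤ astar (Fin.castLE hrs pq.2)} :=
  finrank_stabSp_flagOf hrs astar b hu hb hbij.injective
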